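/- The inversion i_p(x) = x/|x|² on ℝ^{2p} \ {0} is p-harmonic: the p-th iterated Laplacian of each component vanishes, Δᵖ(x_j/|x|²) = 0, and more precisely Δᵏ(x_j/|x|²) = (Π_{r=1}^{k} 2r(2r−2p)) · x_j/|x|^{2+2k} for 1 ≤ k ≤ p. -/

import Mathlib

/-!
Write `N = ‖y‖²`. The Leibniz rule gives `Δ(y_j u) = 2 ∂_j u + y_j Δu`, and for `u = N^s`
one has `∂_i u = 2s y_i N^(s-1)` and `Δu = 2s(n + 2s - 2) N^(s-1)` on `ℝⁿ \ {0}`, so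
`Δ(y_j N^s) = 2s(n + 2s) y_j N^(s-1)`. Starting from `s = -1` and iterating, the `k`-th step
contributes the factor `2k(2k - n)`; in dimension `n = 2p` the factor of step `p` vanishes.
-/

open scoped BigOperators ContDiff
open Complex

noncomputable section

variable {G : Type*} [NormedAddCommGroup G] [NormedSpace ℝ G]

/-- Partial derivative in the `i`-th coordinate direction on Euclidean space. -/
def pd {n : ℕ} (i : Fin n) (f : EuclideanSpace ℝ (Fin n) → G) :
    EuclideanSpace ℝ (Fin n) → G :=
  fun x => fderiv ℝ f x (EuclideanSpace.single i 1)

/-- The Euclidean Laplace–Beltrami operator (extended linearly to vector-valued maps). -/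
def lap {n : ℕ} (f : EuclideanSpace ℝ (Fin n) → G) :
    EuclideanSpace ℝ (Fin n) → G :=
  fun x => ∑ i, pd i (pd i f) x

/-- The conformality operator `κ(z,w) = g(∇z, ∇w)` (complex-bilinear extension). -/
def kap {n : ℕ} (f g : EuclideanSpace ℝ (Fin n) → ℂ) :
    EuclideanSpace ℝ (Fin n) → ℂ :=
  fun x => ∑ i, pd i f x * pd i g x

open Filter Topology Set

section PartialDerivatives

variable {n : ℕ} {x : EuclideanSpace ℝ (Fin n)} (i : Fin n)

lemma HasFDerivAt.pd_eq {f : EuclideanSpace ℝ (Fin n) → G}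
    {f' : EuclideanSpace ℝ (Fin n) →L[ℝ] G} (h : HasFDerivAt f f' x) :
    pd i f x = f' (EuclideanSpace.single i 1) := by
  rw [pd, h.fderiv]

lemma Filter.EventuallyEq.pd_eq {f g : EuclideanSpace ℝ (Fin n) → G} (h : f =ᶠ[𝓝 x] g) :
    pd i f x = pd i g x := by
  rw [pd, pd, h.fderiv_eq]

lemma Set.EqOn.pd {f g : EuclideanSpace ℝ (Fin n) → G} {s : Set (EuclideanSpace ℝ (Fin n))}
    (h : EqOn f g s) (hs : IsOpen s) : EqOn (pd i f) (pd i g) s :=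
  fun _ hy => (h.eventuallyEq_of_mem (hs.mem_nhds hy)).pd_eq i

lemma Set.EqOn.lap {f g : EuclideanSpace ℝ (Fin n) → G} {s : Set (EuclideanSpace ℝ (Fin n))}
    (h : EqOn f g s) (hs : IsOpen s) : EqOn (lap f) (lap g) s :=
  fun _ hy => Finset.sum_congr rfl fun i _ => ((h.pd i hs).pd i hs) hy

lemma pd_const_smul (c : ℝ) (f : EuclideanSpace ℝ (Fin n) → G) : pd i (c • f) = c • pd i f := by
  ext y
  simp [pd, fderiv_const_smul_field]

lemma lap_const_smul (c : ℝ) (f : EuclideanSpace ℝ (Fin n) → G) : lap (c • f) = c • lap f := by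
  ext y
  simp [lap, pd_const_smul, Finset.smul_sum]

lemma pd_const_mul (c : ℝ) (f : EuclideanSpace ℝ (Fin n) → ℝ) :
    pd i (fun y => c * f y) x = c * pd i f x :=
  congrFun (pd_const_smul i c f) x

lemma pd_add {f g : EuclideanSpace ℝ (Fin n) → G} (hf : DifferentiableAt ℝ f x)
    (hg : DifferentiableAt ℝ g x) : pd i (fun y => f y + g y) x = pd i f x + pd i g x := by
  simp only [pd, fderiv_fun_add hf hg, add_apply]

lemma pd_mul {f g : EuclideanSpace ℝ (Fin n) → ℝ} (hf : DifferentiableAt ℝ f x)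
    (hg : DifferentiableAt ℝ g x) :
    pd i (fun y => f y * g y) x = pd i f x * g x + f x * pd i g x := by
  simp only [pd, fderiv_fun_mul hf hg, add_apply, smul_apply, smul_eq_mul]
  ring

lemma pd_comp {φ : ℝ → ℝ} {φ' : ℝ} {f : EuclideanSpace ℝ (Fin n) → ℝ}
    (hφ : HasDerivAt φ φ' (f x)) (hf : DifferentiableAt ℝ f x) :
    pd i (fun y => φ (f y)) x = φ' * pd i f x :=
  (hφ.comp_hasFDerivAt x hf.hasFDerivAt).pd_eq i

lemma pd_coord (j : Fin n) :
    pd i (fun y : EuclideanSpace ℝ (Fin n) => y j) x = if j = i then 1 else 0 :=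
  ((EuclideanSpace.proj (𝕜 := ℝ) j).hasFDerivAt.pd_eq i).trans (by simp)

lemma pd_coord_mul {u : EuclideanSpace ℝ (Fin n) → ℝ} (j : Fin n) (hu : DifferentiableAt ℝ u x) :
    pd i (fun y => y j * u y) x = (if j = i then 1 else 0) * u x + x j * pd i u x := by
  rw [pd_mul i (by fun_prop) hu, pd_coord]

lemma ContDiffAt.differentiableAt_pd {u : EuclideanSpace ℝ (Fin n) → G}
    (hu : ContDiffAt ℝ 2 u x) : DifferentiableAt ℝ (pd i u) x :=
  ((hu.fderiv_right (m := 1) le_rfl).differentiableAt one_ne_zero).clm_apply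
    (differentiableAt_const _)

lemma lap_coord_mul {u : EuclideanSpace ℝ (Fin n) → ℝ} (j : Fin n) (hu : ContDiffAt ℝ 2 u x) :
    lap (fun y => y j * u y) x = 2 * pd j u x + x j * lap u x := by
  have hdiff : ∀ᶠ y in 𝓝 x, DifferentiableAt ℝ u y :=
    (hu.eventually (by simp)).mono fun y hy => hy.differentiableAt (by simp)
  have hpd (i : Fin n) : pd i (pd i fun y => y j * u y) x =
      (if j = i then 2 * pd i u x else 0) + x j * pd i (pd i u) x := by
    have hgrad : pd i (fun y => y j * u y) =ᶠ[𝓝 x]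
        fun y => (if j = i then 1 else 0) * u y + y j * pd i u y :=
      hdiff.mono fun y hy => pd_coord_mul i j hy
    have hu₁ : DifferentiableAt ℝ u x := hdiff.self_of_nhds
    have hu₂ : DifferentiableAt ℝ (pd i u) x := hu.differentiableAt_pd i
    rw [hgrad.pd_eq, pd_add i (by fun_prop) (by fun_prop), pd_const_mul, pd_coord_mul i j hu₂]
    split_ifs <;> ring
  simp only [lap, hpd, Finset.sum_add_distrib, Finset.sum_ite_eq, Finset.mem_univ, if_true,
    Finset.mul_sum]

end PartialDerivatives

section NormSqZPow

variable {n : ℕ} {x : EuclideanSpace ℝ (Fin n)}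

lemma pd_norm_sq (i : Fin n) : pd i (fun y : EuclideanSpace ℝ (Fin n) => ‖y‖ ^ 2) x = 2 * x i := by
  rw [(hasStrictFDerivAt_norm_sq x).hasFDerivAt.pd_eq]
  simp [EuclideanSpace.inner_single_right]

lemma pd_norm_sq_zpow (i : Fin n) (s : ℤ) (hx : x ≠ 0) :
    pd i (fun y : EuclideanSpace ℝ (Fin n) => (‖y‖ ^ 2) ^ s) x
      = x i * (2 * s * (‖x‖ ^ 2) ^ (s - 1)) := by
  rw [pd_comp i (hasDerivAt_zpow s _ (Or.inl (by positivity)))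
    (hasStrictFDerivAt_norm_sq x).differentiableAt, pd_norm_sq]
  ring

lemma contDiffAt_norm_sq_zpow {m : WithTop ℕ∞} (s : ℤ) (hx : x ≠ 0) :
    ContDiffAt ℝ m (fun y : EuclideanSpace ℝ (Fin n) => (‖y‖ ^ 2) ^ s) x :=
  (analyticAt_id.zpow (by simpa using hx)).contDiffAt.comp x (contDiff_norm_sq ℝ).contDiffAt

lemma lap_norm_sq_zpow (s : ℤ) (hx : x ≠ 0) :
    lap (fun y : EuclideanSpace ℝ (Fin n) => (‖y‖ ^ 2) ^ s) x
      = 2 * s * (n + 2 * s - 2) * (‖x‖ ^ 2) ^ (s - 1) := by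
  have hgrad (i : Fin n) : pd i (fun y : EuclideanSpace ℝ (Fin n) => (‖y‖ ^ 2) ^ s) =ᶠ[𝓝 x]
      fun y => y i * (2 * s * (‖y‖ ^ 2) ^ (s - 1)) :=
    (eventually_ne_nhds hx).mono fun y hy => pd_norm_sq_zpow i s hy
  have hdiff : DifferentiableAt ℝ
      (fun y : EuclideanSpace ℝ (Fin n) => 2 * s * (‖y‖ ^ 2) ^ (s - 1)) x :=
    ((contDiffAt_norm_sq_zpow (s - 1) hx).differentiableAt one_ne_zero).const_mul _
  have hpow : (‖x‖ ^ 2) ^ (s - 1 - 1) * ‖x‖ ^ 2 = (‖x‖ ^ 2) ^ (s - 1) := by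
    rw [← zpow_add_one₀ (by simpa using hx), sub_add_cancel]
  simp only [lap, fun i => (hgrad i).pd_eq, pd_coord_mul _ _ hdiff, pd_const_mul,
    pd_norm_sq_zpow _ _ hx, if_true, one_mul]
  calc _ = ∑ i, (2 * s * (‖x‖ ^ 2) ^ (s - 1)
          + 4 * s * (s - 1) * (‖x‖ ^ 2) ^ (s - 1 - 1) * x i ^ 2) := by
        refine Finset.sum_congr rfl fun i _ => ?_
        push_cast
        ring
    _ = n * (2 * s * (‖x‖ ^ 2) ^ (s - 1))
          + 4 * s * (s - 1) * ((‖x‖ ^ 2) ^ (s - 1 - 1) * ‖x‖ ^ 2) := by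
        rw [Finset.sum_add_distrib, Finset.sum_const, ← Finset.mul_sum,
          ← EuclideanSpace.real_norm_sq_eq, Finset.card_univ, Fintype.card_fin, nsmul_eq_mul]
        ring
    _ = _ := by
        rw [hpow]
        ring

lemma lap_coord_mul_norm_sq_zpow (j : Fin n) (s : ℤ) (hx : x ≠ 0) :
    lap (fun y : EuclideanSpace ℝ (Fin n) => y j * (‖y‖ ^ 2) ^ s) x
      = 2 * s * (n + 2 * s) * (x j * (‖x‖ ^ 2) ^ (s - 1)) := by
  rw [lap_coord_mul j (contDiffAt_norm_sq_zpow s hx), pd_norm_sq_zpow j s hx,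
    lap_norm_sq_zpow s hx]
  ring

end NormSqZPow

section Iterates

variable {n : ℕ}

lemma eqOn_iterate_lap_coord_mul_norm_sq_zpow (j : Fin n) (s : ℤ) (k : ℕ) :
    EqOn (lap^[k] fun y : EuclideanSpace ℝ (Fin n) => y j * (‖y‖ ^ 2) ^ s)
      ((∏ r ∈ Finset.range k, 2 * ((s : ℝ) - r) * (n + 2 * ((s : ℝ) - r))) •
        fun y => y j * (‖y‖ ^ 2) ^ (s - k)) {0}ᶜ := by
  induction k with
  | zero => intro y _; simp
  | succ k ih =>
    intro y hy
    rw [Function.iterate_succ_apply', ih.lap isOpen_compl_singleton hy, lap_const_smul,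
      Pi.smul_apply, lap_coord_mul_norm_sq_zpow j _ hy, Finset.prod_range_succ, Pi.smul_apply,
      smul_eq_mul, smul_eq_mul, Nat.cast_succ, ← sub_sub]
    push_cast
    ring

theorem iterate_lap_coord_div_norm_sq {x : EuclideanSpace ℝ (Fin n)} (j : Fin n) (k : ℕ)
    (hx : x ≠ 0) :
    lap^[k] (fun y : EuclideanSpace ℝ (Fin n) => y j / ‖y‖ ^ 2) x
      = (∏ r ∈ Finset.Icc 1 k, 2 * (r : ℝ) * (2 * r - n)) * x j / ‖x‖ ^ (2 + 2 * k) := by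
  have h := eqOn_iterate_lap_coord_mul_norm_sq_zpow j (-1) k hx
  simp only [zpow_neg_one, ← div_eq_mul_inv] at h
  have hcoeff : ∏ r ∈ Finset.range k, 2 * (((-1 : ℤ) : ℝ) - r) * (n + 2 * (((-1 : ℤ) : ℝ) - r))
      = ∏ r ∈ Finset.Icc 1 k, 2 * (r : ℝ) * (2 * r - n) := by
    rw [← Finset.Ico_add_one_right_eq_Icc, Finset.prod_Ico_eq_prod_range, Nat.add_sub_cancel]
    refine Finset.prod_congr rfl fun r _ => ?_
    push_cast
    ring
  have hpow : (‖x‖ ^ 2) ^ (-1 - k : ℤ) = (‖x‖ ^ (2 + 2 * k))⁻¹ := by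
    rw [show (-1 - k : ℤ) = -((1 + k : ℕ) : ℤ) by push_cast; ring, zpow_neg, zpow_natCast,
      ← pow_mul, mul_add, mul_one]
  rw [h, Pi.smul_apply, smul_eq_mul, hcoeff, hpow, mul_div_assoc, div_eq_mul_inv]

end Iterates

/-- The inversion `x ↦ x/|x|²` of `ℝ^{2p} \ {0}` is `p`-harmonic:
`Δᵏ(x_j/|x|²) = (Π_{r=1}^{k} 2r(2r−2p))·x_j/|x|^{2+2k}` for `1 ≤ k ≤ p`, and in
particular `Δᵖ(x_j/|x|²) = 0`. -/
theorem inversion_p_harmonic (p : ℕ) (hp : 0 < p) :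
    ∀ x : EuclideanSpace ℝ (Fin (2 * p)), x ≠ 0 → ∀ j : Fin (2 * p),
      (∀ k, 1 ≤ k → k ≤ p →
        lap^[k] (fun y : EuclideanSpace ℝ (Fin (2 * p)) => y j / ‖y‖ ^ 2) x
          = (∏ r ∈ Finset.Icc 1 k, (2 * (r : ℝ)) * (2 * (r : ℝ) - 2 * (p : ℝ)))
              * x j / ‖x‖ ^ (2 + 2 * k)) ∧
      lap^[p] (fun y : EuclideanSpace ℝ (Fin (2 * p)) => y j / ‖y‖ ^ 2) x = 0 := by
  intro x hx j
  have hlap (k : ℕ) := iterate_lap_coord_div_norm_sq j k hx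
  push_cast at hlap
  refine ⟨fun k _ _ => hlap k, ?_⟩
  rw [hlap p, Finset.prod_eq_zero (Finset.mem_Icc.mpr ⟨hp, le_rfl⟩) (by ring), zero_mul, zero_div]
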